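/- Let H : ℝ^N → ℝ be C² on ℝ^N \ {0}, positively 1-homogeneous, positive off 0, and suppose the Hessian of H² satisfies Hess(H²)(ξ)ζ·ζ ≥ Ξ|ζ|² for some Ξ > 0 and all ξ ≠ 0. Then for all ξ, η ∈ ℝ^N, (H(ξ)∇H(ξ) − H(η)∇H(η)) · (ξ − η) ≥ (Ξ/2)|ξ − η|², where H(0)∇H(0) is interpreted as 0. In particular the map ξ ↦ H(ξ)∇H(ξ) is strictly monotone. -/

import Mathlib

/-!
Write `G = H²`, so that `H ∇H = ½ ∇G` off the origin. If the segment `[η, ξ]` avoids the origin,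
the mean value theorem for `t ↦ DG(η + t (ξ - η)) (ξ - η)` together with the Hessian bound gives
the inequality directly. Otherwise `ξ` and `η` lie on opposite rays through `0`, and it suffices to
know `⟪H(x) ∇H(x), x⟫ ≥ (Ξ/2) |x|²`; this follows from the Euler identities
`D²G(x)(x, x) = 2 G(x) = DG(x) x` of the positively 2-homogeneous function `G`.
-/

open Set Filter Topology
open scoped RealInnerProductSpace

section Homogeneous

variable {E : Type*} [NormedAddCommGroup E] [NormedSpace ℝ E] {G : E → ℝ}

theorem hasDerivAt_fderiv_apply_add_smul {x v : E} {t : ℝ}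
    (hG : ContDiffAt ℝ 2 G (x + t • v)) :
    HasDerivAt (fun s : ℝ => fderiv ℝ G (x + s • v) v)
      (iteratedFDeriv ℝ 2 G (x + t • v) ![v, v]) t := by
  have hline : HasDerivAt (fun s : ℝ => x + s • v) v t := by
    simpa using ((hasDerivAt_id t).smul_const v).const_add x
  have hD2 : HasFDerivAt (fderiv ℝ G) (fderiv ℝ (fderiv ℝ G) (x + t • v)) (x + t • v) :=
    ((hG.fderiv_right (by norm_num)).differentiableAt one_ne_zero).hasFDerivAt
  have hD1 : HasDerivAt (fun s : ℝ => fderiv ℝ G (x + s • v))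
      (fderiv ℝ (fderiv ℝ G) (x + t • v) v) t := hD2.comp_hasDerivAt t hline
  rw [iteratedFDeriv_two_apply]
  simpa using hD1.clm_apply (hasDerivAt_const t v)

theorem fderiv_smul_apply_self_of_homogeneous {x : E} {t : ℝ} (ht : 0 < t)
    (hhom : ∀ s : ℝ, 0 < s → G (s • x) = s ^ 2 * G x) (hG : DifferentiableAt ℝ G (t • x)) :
    fderiv ℝ G (t • x) x = 2 * t * G x := by
  have hray : HasDerivAt (fun s : ℝ => s • x) x t := by
    simpa using (hasDerivAt_id t).smul_const x
  have hchain : HasDerivAt (fun s : ℝ => G (s • x)) (fderiv ℝ G (t • x) x) t :=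
    hG.hasFDerivAt.comp_hasDerivAt t hray
  have hpow : HasDerivAt (fun s : ℝ => G (s • x)) (2 * t * G x) t := by
    refine ((hasDerivAt_pow 2 t).mul_const (G x)).congr_of_eventuallyEq ?_
      |>.congr_deriv (by ring)
    filter_upwards [Ioi_mem_nhds ht] with s hs using hhom s hs
  exact hchain.unique hpow

theorem iteratedFDeriv_two_apply_self_of_homogeneous {x : E} (hG : ContDiffAt ℝ 2 G x)
    (hhom : ∀ s : ℝ, 0 < s → G (s • x) = s ^ 2 * G x) :
    iteratedFDeriv ℝ 2 G x ![x, x] = 2 * G x := by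
  have hray : HasDerivAt (fun s : ℝ => fderiv ℝ G (s • x) x)
      (iteratedFDeriv ℝ 2 G x ![x, x]) 1 := by
    simpa using hasDerivAt_fderiv_apply_add_smul (x := 0) (v := x) (t := 1) (by simpa using hG)
  have hsmooth : ∀ᶠ s in 𝓝 (1 : ℝ), ContDiffAt ℝ 2 G (s • x) :=
    (continuous_id.smul continuous_const).tendsto' (1 : ℝ) x (one_smul ℝ x)
      |>.eventually (hG.eventually (by simp))
  have hlin : HasDerivAt (fun s : ℝ => fderiv ℝ G (s • x) x) (2 * G x) 1 := by
    refine ((hasDerivAt_id (1 : ℝ)).const_mul (2 * G x)).congr_of_eventuallyEq ?_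
      |>.congr_deriv (by ring)
    filter_upwards [hsmooth, Ioi_mem_nhds one_pos] with s hs hs_pos
    rw [fderiv_smul_apply_self_of_homogeneous hs_pos hhom (hs.differentiableAt two_ne_zero)]
    simp only [id]
    ring
  exact hray.unique hlin

theorem le_fderiv_apply_sub_fderiv_apply {x y : E} {m : ℝ}
    (hG : ∀ z ∈ segment ℝ x y, ContDiffAt ℝ 2 G z)
    (hm : ∀ z ∈ segment ℝ x y, m ≤ iteratedFDeriv ℝ 2 G z ![y - x, y - x]) :
    m ≤ fderiv ℝ G y (y - x) - fderiv ℝ G x (y - x) := by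
  have hmem : ∀ t ∈ Icc (0 : ℝ) 1, x + t • (y - x) ∈ segment ℝ x y := fun t ht => by
    rw [segment_eq_image']
    exact ⟨t, ht, rfl⟩
  have hline : ∀ t ∈ Icc (0 : ℝ) 1,
      HasDerivAt (fun s : ℝ => fderiv ℝ G (x + s • (y - x)) (y - x))
        (iteratedFDeriv ℝ 2 G (x + t • (y - x)) ![y - x, y - x]) t := fun t ht =>
    hasDerivAt_fderiv_apply_add_smul (hG _ (hmem t ht))
  obtain ⟨c, hc, hslope⟩ := exists_hasDerivAt_eq_slope _ _ zero_lt_one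
    (fun t ht => (hline t ht).continuousAt.continuousWithinAt)
    (fun t ht => hline t (Ioo_subset_Icc_self ht))
  simpa [hslope] using hm _ (hmem c (Ioo_subset_Icc_self hc))

end Homogeneous

section Flux

variable {E : Type*} [NormedAddCommGroup E] [InnerProductSpace ℝ E] [CompleteSpace E]
  {H : E → ℝ}

-- `DecidableEq E` is a parameter so that, on `EuclideanSpace`, this unfolds to the very `if`
-- (with its `WithLp` decidability instance) written in the theorem.
noncomputable def anisoFlux [DecidableEq E] (H : E → ℝ) (ξ : E) : E :=
  if ξ = 0 then 0 else H ξ • gradient H ξ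

theorem fderiv_sq_apply {x : E} (hH : DifferentiableAt ℝ H x) (v : E) :
    fderiv ℝ (fun y => H y ^ 2) x v = 2 * ⟪H x • gradient H x, v⟫ := by
  have hgrad : HasFDerivAt H (InnerProductSpace.toDual ℝ E (gradient H x)) x :=
    hH.hasGradientAt.hasFDerivAt
  rw [(hgrad.pow 2).fderiv]
  simp only [Nat.add_one_sub_one, pow_one, nsmul_eq_mul, Nat.cast_ofNat, toDual_gradient,
    smul_apply, smul_eq_mul, real_inner_smul_left, inner_gradient_left]
  ring

theorem half_mul_norm_sq_le_inner_self {Ξ : ℝ} {x : E} (hH : ContDiffAt ℝ 2 H x)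
    (hhom : ∀ t : ℝ, 0 ≤ t → ∀ ξ : E, H (t • ξ) = t * H ξ)
    (hhess : Ξ * ‖x‖ ^ 2 ≤ iteratedFDeriv ℝ 2 (fun y => H y ^ 2) x ![x, x]) :
    Ξ / 2 * ‖x‖ ^ 2 ≤ ⟪H x • gradient H x, x⟫ := by
  have hhom2 : ∀ s : ℝ, 0 < s → H (s • x) ^ 2 = s ^ 2 * H x ^ 2 := fun s hs => by
    rw [hhom s hs.le]
    ring
  have hG : ContDiffAt ℝ 2 (fun y => H y ^ 2) x := hH.pow 2
  have hEuler₁ := fderiv_smul_apply_self_of_homogeneous one_pos hhom2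
    (by simpa using hG.differentiableAt two_ne_zero)
  have hEuler₂ := iteratedFDeriv_two_apply_self_of_homogeneous hG hhom2
  rw [one_smul, fderiv_sq_apply (hH.differentiableAt two_ne_zero)] at hEuler₁
  linarith

theorem half_mul_mul_norm_sq_le_inner_anisoFlux_smul [DecidableEq E] {Ξ c : ℝ} (hc : 0 ≤ c)
    (v : E) (hreg : ContDiffOn ℝ 2 H {(0 : E)}ᶜ)
    (hhom : ∀ t : ℝ, 0 ≤ t → ∀ ξ : E, H (t • ξ) = t * H ξ)
    (hhess : ∀ ξ : E, ξ ≠ 0 → ∀ ζ : E,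
      Ξ * ‖ζ‖ ^ 2 ≤ iteratedFDeriv ℝ 2 (fun x => (H x) ^ 2) ξ ![ζ, ζ]) :
    Ξ / 2 * c * ‖v‖ ^ 2 ≤ ⟪anisoFlux H (c • v), v⟫ := by
  by_cases hcv : c • v = 0
  · rcases smul_eq_zero.mp hcv with rfl | rfl <;> simp [anisoFlux]
  have hc' : 0 < c := hc.lt_of_ne (by rintro rfl; simp at hcv)
  have hray := half_mul_norm_sq_le_inner_self
    (hreg.contDiffAt (isOpen_compl_singleton.mem_nhds hcv)) hhom (hhess _ hcv _)
  rw [norm_smul, Real.norm_of_nonneg hc, real_inner_smul_right] at hray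
  rw [anisoFlux, if_neg hcv]
  nlinarith

theorem half_mul_norm_sq_le_inner_anisoFlux_sub_of_zero_mem_segment [DecidableEq E] {Ξ : ℝ}
    {ξ η : E} (h0 : (0 : E) ∈ segment ℝ η ξ)
    (hreg : ContDiffOn ℝ 2 H {(0 : E)}ᶜ)
    (hhom : ∀ t : ℝ, 0 ≤ t → ∀ ξ : E, H (t • ξ) = t * H ξ)
    (hhess : ∀ ξ : E, ξ ≠ 0 → ∀ ζ : E,
      Ξ * ‖ζ‖ ^ 2 ≤ iteratedFDeriv ℝ 2 (fun x => (H x) ^ 2) ξ ![ζ, ζ]) :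
    Ξ / 2 * ‖ξ - η‖ ^ 2 ≤ ⟪anisoFlux H ξ - anisoFlux H η, ξ - η⟫ := by
  rw [inner_sub_left]
  rw [segment_eq_image'] at h0
  obtain ⟨t, ⟨ht₀, ht₁⟩, hzero⟩ := h0
  have hξ : (1 - t) • (ξ - η) = ξ := by linear_combination (norm := module) -hzero
  have hη : t • (η - ξ) = η := by linear_combination (norm := module) -hzero
  have hfξ := half_mul_mul_norm_sq_le_inner_anisoFlux_smul (sub_nonneg.mpr ht₁) (ξ - η)
    hreg hhom hhess
  have hfη := half_mul_mul_norm_sq_le_inner_anisoFlux_smul ht₀ (η - ξ) hreg hhom hhess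
  rw [hξ] at hfξ
  rw [hη, norm_sub_rev, ← neg_sub ξ η, inner_neg_right] at hfη
  linarith

theorem half_mul_norm_sq_le_inner_anisoFlux_sub_of_zero_notMem_segment [DecidableEq E]
    {Ξ : ℝ} {ξ η : E} (h0 : (0 : E) ∉ segment ℝ η ξ)
    (hreg : ContDiffOn ℝ 2 H {(0 : E)}ᶜ)
    (hhess : ∀ ξ : E, ξ ≠ 0 → ∀ ζ : E,
      Ξ * ‖ζ‖ ^ 2 ≤ iteratedFDeriv ℝ 2 (fun x => (H x) ^ 2) ξ ![ζ, ζ]) :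
    Ξ / 2 * ‖ξ - η‖ ^ 2 ≤ ⟪anisoFlux H ξ - anisoFlux H η, ξ - η⟫ := by
  rw [inner_sub_left]
  have hne : ∀ z ∈ segment ℝ η ξ, z ≠ 0 := fun z hz => ne_of_mem_of_not_mem hz h0
  have hsmooth : ∀ z ∈ segment ℝ η ξ, ContDiffAt ℝ 2 H z := fun z hz =>
    hreg.contDiffAt (isOpen_compl_singleton.mem_nhds (hne z hz))
  have hmvt := le_fderiv_apply_sub_fderiv_apply (fun z hz => (hsmooth z hz).pow 2)
    (fun z hz => hhess z (hne z hz) (ξ - η))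
  have hξ := right_mem_segment ℝ η ξ
  have hη := left_mem_segment ℝ η ξ
  rw [fderiv_sq_apply ((hsmooth ξ hξ).differentiableAt two_ne_zero),
    fderiv_sq_apply ((hsmooth η hη).differentiableAt two_ne_zero)] at hmvt
  rw [anisoFlux, anisoFlux, if_neg (hne ξ hξ), if_neg (hne η hη)]
  linarith

end Flux

theorem stmt6_general {N : ℕ} (H : EuclideanSpace ℝ (Fin N) → ℝ) (Ξ : ℝ)
    (hreg : ContDiffOn ℝ 2 H {(0 : EuclideanSpace ℝ (Fin N))}ᶜ)
    (hhom : ∀ t : ℝ, 0 ≤ t → ∀ ξ : EuclideanSpace ℝ (Fin N), H (t • ξ) = t * H ξ)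
    (hhess : ∀ ξ : EuclideanSpace ℝ (Fin N), ξ ≠ 0 →
      ∀ ζ : EuclideanSpace ℝ (Fin N),
        Ξ * ‖ζ‖ ^ 2 ≤ iteratedFDeriv ℝ 2 (fun x => (H x) ^ 2) ξ ![ζ, ζ]) :
    ∀ ξ η : EuclideanSpace ℝ (Fin N),
      (Ξ / 2) * ‖ξ - η‖ ^ 2 ≤
        ⟪(if ξ = 0 then 0 else H ξ • gradient H ξ) -
          (if η = 0 then 0 else H η • gradient H η), ξ - η⟫ := by
  intro ξ η
  change _ ≤ ⟪anisoFlux H ξ - anisoFlux H η, ξ - η⟫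
  by_cases h0 : (0 : EuclideanSpace ℝ (Fin N)) ∈ segment ℝ η ξ
  · exact half_mul_norm_sq_le_inner_anisoFlux_sub_of_zero_mem_segment h0 hreg hhom hhess
  · exact half_mul_norm_sq_le_inner_anisoFlux_sub_of_zero_notMem_segment h0 hreg hhess

/-- Strong monotonicity of the anisotropic flux `ξ ↦ H(ξ)∇H(ξ)` (with value `0` at `ξ = 0`):
if `Hess(H²)(ξ) ζ · ζ ≥ Ξ|ζ|²` for all `ξ ≠ 0`, then
`(H(ξ)∇H(ξ) − H(η)∇H(η)) · (ξ − η) ≥ (Ξ/2)|ξ − η|²` for all `ξ, η`. -/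
theorem stmt6 {N : ℕ} (H : EuclideanSpace ℝ (Fin N) → ℝ) (Ξ : ℝ) (hΞ : 0 < Ξ)
    (hreg : ContDiffOn ℝ 2 H {(0 : EuclideanSpace ℝ (Fin N))}ᶜ)
    (hpos : ∀ ξ : EuclideanSpace ℝ (Fin N), ξ ≠ 0 → 0 < H ξ)
    (hhom : ∀ t : ℝ, 0 ≤ t → ∀ ξ : EuclideanSpace ℝ (Fin N), H (t • ξ) = t * H ξ)
    (hhess : ∀ ξ : EuclideanSpace ℝ (Fin N), ξ ≠ 0 →
      ∀ ζ : EuclideanSpace ℝ (Fin N),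
        Ξ * ‖ζ‖ ^ 2 ≤ iteratedFDeriv ℝ 2 (fun x => (H x) ^ 2) ξ ![ζ, ζ]) :
    ∀ ξ η : EuclideanSpace ℝ (Fin N),
      (Ξ / 2) * ‖ξ - η‖ ^ 2 ≤
        ⟪(if ξ = 0 then 0 else H ξ • gradient H ξ) -
          (if η = 0 then 0 else H η • gradient H η), ξ - η⟫ :=
  stmt6_general H Ξ hreg hhom hhess
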